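/- arXiv:1705.01821 — 4 statements merged into one kernel-verified Lean document; each statement's English description precedes it below -/
import Mathlib

section
/- Let μ be a finite signed measure on a compact interval [a,b] ⊂ ℝ with density ρ (with respect to Lebesgue measure) such that: (i) μ([a,b]) = 0, (ii) ∫_{[a,b]} t dμ(t) = 0, and (iii) there exist points p ≤ q in [a,b] with ρ ≥ 0 on [a,p] ∪ [q,b] and ρ ≤ 0 on (p,q). Then for every convex function g : [a,b] → ℝ, ∫_{[a,b]} g dμ ≥ 0. -/
/-!
If `p < q`, let `ℓ` be the secant of `g` through `p` and `q`. By convexity `g - ℓ` is `≤ 0` on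
`[p, q]` and `≥ 0` outside it, so `(g - ℓ) ρ ≥ 0` pointwise; and `∫ ℓ ρ = 0` because `ℓ` is affine
and `ρ` has vanishing mass and first moment. Hence `∫ g ρ = ∫ (g - ℓ) ρ ≥ 0`. If `q ≤ p`, then
`ρ ≥ 0` on all of `[a, b]`, so zero mass forces `ρ = 0` almost everywhere.
-/

open MeasureTheory Set

theorem sub_secant_eq_mul_sub_slope (g : ℝ → ℝ) (p q t : ℝ) :
    g t - (g p + slope g p q * (t - p)) = (t - p) * (slope g p t - slope g p q) := by
  have h := sub_smul_slope g p t
  rw [smul_eq_mul, vsub_eq_sub] at h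
  linear_combination -h

namespace ConvexOn

variable {s : Set ℝ} {g : ℝ → ℝ} {p q t : ℝ}

theorem slope_le_slope (hg : ConvexOn ℝ s g) (hp : p ∈ s) (ht : t ∈ s) (hq : q ∈ s)
    (htp : t ≠ p) (hqp : q ≠ p) (htq : t ≤ q) : slope g p t ≤ slope g p q := by
  simpa only [slope_def_field] using hg.secant_mono hp ht hq htp hqp htq

theorem le_secant (hg : ConvexOn ℝ s g) (hp : p ∈ s) (hq : q ∈ s) (ht : t ∈ s)
    (hpt : p ≤ t) (htq : t ≤ q) : g t ≤ g p + slope g p q * (t - p) := by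
  rcases eq_or_lt_of_le hpt with rfl | hpt
  · simp
  rw [← sub_nonpos, sub_secant_eq_mul_sub_slope]
  exact mul_nonpos_of_nonneg_of_nonpos (sub_nonneg.2 hpt.le)
    (sub_nonpos.2 (hg.slope_le_slope hp ht hq hpt.ne' (hpt.trans_le htq).ne' htq))

theorem secant_le_of_le_left (hg : ConvexOn ℝ s g) (hp : p ∈ s) (hq : q ∈ s) (ht : t ∈ s)
    (hpq : p < q) (htp : t ≤ p) : g p + slope g p q * (t - p) ≤ g t := by
  rcases eq_or_lt_of_le htp with rfl | htp
  · simp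
  rw [← sub_nonneg, sub_secant_eq_mul_sub_slope]
  exact mul_nonneg_of_nonpos_of_nonpos (sub_nonpos.2 htp.le)
    (sub_nonpos.2 (hg.slope_le_slope hp ht hq htp.ne hpq.ne' (htp.trans hpq).le))

theorem secant_le_of_right_le (hg : ConvexOn ℝ s g) (hp : p ∈ s) (hq : q ∈ s) (ht : t ∈ s)
    (hpq : p < q) (hqt : q ≤ t) : g p + slope g p q * (t - p) ≤ g t := by
  rw [← sub_nonneg, sub_secant_eq_mul_sub_slope]
  exact mul_nonneg (sub_nonneg.2 (hpq.le.trans hqt))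
    (sub_nonneg.2 (hg.slope_le_slope hp hq ht hpq.ne' (hpq.trans_le hqt).ne' hqt))

theorem sub_secant_mul_nonneg {a b : ℝ} {ρ : ℝ → ℝ} (hg : ConvexOn ℝ (Icc a b) g)
    (hp : p ∈ Icc a b) (hq : q ∈ Icc a b) (hpq : p < q)
    (hρ₁ : ∀ t ∈ Icc a p, 0 ≤ ρ t) (hρ₂ : ∀ t ∈ Icc q b, 0 ≤ ρ t)
    (hρ₃ : ∀ t ∈ Ioo p q, ρ t ≤ 0) (ht : t ∈ Icc a b) :
    0 ≤ (g t - (g p + slope g p q * (t - p))) * ρ t := by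
  rcases le_or_gt t p with htp | hpt
  · exact mul_nonneg (sub_nonneg.2 (hg.secant_le_of_le_left hp hq ht hpq htp))
      (hρ₁ t ⟨ht.1, htp⟩)
  rcases le_or_gt q t with hqt | htq
  · exact mul_nonneg (sub_nonneg.2 (hg.secant_le_of_right_le hp hq ht hpq hqt))
      (hρ₂ t ⟨hqt, ht.2⟩)
  exact mul_nonneg_of_nonpos_of_nonpos (sub_nonpos.2 (hg.le_secant hp hq ht hpt.le htq.le))
    (hρ₃ t ⟨hpt, htq⟩)

end ConvexOn

section SignedDensity

variable {μ : Measure ℝ} {s : Set ℝ} {ρ g : ℝ → ℝ}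

theorem affine_mul_eq (ρ : ℝ → ℝ) (c d x₀ : ℝ) :
    (fun t => (c + d * (t - x₀)) * ρ t) = fun t => (c - d * x₀) * ρ t + d * (t * ρ t) := by
  funext t; ring

theorem MeasureTheory.IntegrableOn.affine_mul (hρ : IntegrableOn ρ s μ)
    (htρ : IntegrableOn (fun t => t * ρ t) s μ) (c d x₀ : ℝ) :
    IntegrableOn (fun t => (c + d * (t - x₀)) * ρ t) s μ := by
  rw [affine_mul_eq]
  exact (hρ.const_mul _).add (htρ.const_mul _)

theorem setIntegral_affine_mul_eq_zero (hρ : IntegrableOn ρ s μ)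
    (htρ : IntegrableOn (fun t => t * ρ t) s μ) (hmass : ∫ t in s, ρ t ∂μ = 0)
    (hmom : ∫ t in s, t * ρ t ∂μ = 0) (c d x₀ : ℝ) :
    ∫ t in s, (c + d * (t - x₀)) * ρ t ∂μ = 0 := by
  rw [affine_mul_eq, integral_add (hρ.const_mul _) (htρ.const_mul _), integral_const_mul,
    integral_const_mul, hmass, hmom]
  simp

theorem setIntegral_mul_nonneg_of_sub_affine_mul_nonneg (hs : MeasurableSet s)
    (hρ : IntegrableOn ρ s μ) (htρ : IntegrableOn (fun t => t * ρ t) s μ)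
    (hmass : ∫ t in s, ρ t ∂μ = 0) (hmom : ∫ t in s, t * ρ t ∂μ = 0)
    (hgρ : IntegrableOn (fun t => g t * ρ t) s μ) {c d x₀ : ℝ}
    (hsign : ∀ t ∈ s, 0 ≤ (g t - (c + d * (t - x₀))) * ρ t) :
    0 ≤ ∫ t in s, g t * ρ t ∂μ := by
  calc 0 ≤ ∫ t in s, (g t - (c + d * (t - x₀))) * ρ t ∂μ := setIntegral_nonneg hs hsign
    _ = ∫ t in s, g t * ρ t ∂μ := by
      simp_rw [sub_mul]
      rw [integral_sub hgρ (hρ.affine_mul htρ c d x₀),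
        setIntegral_affine_mul_eq_zero hρ htρ hmass hmom, sub_zero]

theorem setIntegral_mul_eq_zero_of_nonneg (hs : MeasurableSet s) (hρ : IntegrableOn ρ s μ)
    (hρ₀ : ∀ t ∈ s, 0 ≤ ρ t) (hmass : ∫ t in s, ρ t ∂μ = 0) :
    ∫ t in s, g t * ρ t ∂μ = 0 := by
  have hρ_ae : ρ =ᵐ[μ.restrict s] 0 :=
    (setIntegral_eq_zero_iff_of_nonneg_ae ((ae_restrict_iff' hs).2 (ae_of_all μ hρ₀)) hρ).1
      hmass
  rw [integral_congr_ae (hρ_ae.mono fun t ht => by rw [ht, Pi.zero_apply, mul_zero])]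
  simp

end SignedDensity

theorem stmt_1_general (a b p q : ℝ) (ρ g : ℝ → ℝ)
    (hp : p ∈ Set.Icc a b) (hq : q ∈ Set.Icc a b)
    (hρint : IntegrableOn ρ (Set.Icc a b))
    (hρ1 : ∀ t ∈ Set.Icc a p, 0 ≤ ρ t)
    (hρ2 : ∀ t ∈ Set.Icc q b, 0 ≤ ρ t)
    (hρ3 : ∀ t ∈ Set.Ioo p q, ρ t ≤ 0)
    (hmass : (∫ t in Set.Icc a b, ρ t) = 0)
    (hmom : (∫ t in Set.Icc a b, t * ρ t) = 0)
    (hg : ConvexOn ℝ (Set.Icc a b) g)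
    (hgint : IntegrableOn (fun t => g t * ρ t) (Set.Icc a b)) :
    0 ≤ ∫ t in Set.Icc a b, g t * ρ t := by
  rcases lt_or_ge p q with hpq | hqp
  · exact setIntegral_mul_nonneg_of_sub_affine_mul_nonneg measurableSet_Icc hρint
      (hρint.continuousOn_mul continuousOn_id isCompact_Icc) hmass hmom hgint
      fun t ht => hg.sub_secant_mul_nonneg hp hq hpq hρ1 hρ2 hρ3 ht
  · have hρ₀ : ∀ t ∈ Icc a b, 0 ≤ ρ t := fun t ht =>
      (le_total t p).elim (fun htp => hρ1 t ⟨ht.1, htp⟩) fun hpt => hρ2 t ⟨hqp.trans hpt, ht.2⟩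
    exact (setIntegral_mul_eq_zero_of_nonneg measurableSet_Icc hρint hρ₀ hmass).ge

theorem stmt_1 (a b p q : ℝ) (ρ g : ℝ → ℝ)
    (hab : a ≤ b) (hp : p ∈ Set.Icc a b) (hq : q ∈ Set.Icc a b) (hpq : p ≤ q)
    (hρint : IntegrableOn ρ (Set.Icc a b))
    (hρ1 : ∀ t ∈ Set.Icc a p, 0 ≤ ρ t)
    (hρ2 : ∀ t ∈ Set.Icc q b, 0 ≤ ρ t)
    (hρ3 : ∀ t ∈ Set.Ioo p q, ρ t ≤ 0)
    (hmass : (∫ t in Set.Icc a b, ρ t) = 0)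
    (hmom : (∫ t in Set.Icc a b, t * ρ t) = 0)
    (hg : ConvexOn ℝ (Set.Icc a b) g)
    (hgint : IntegrableOn (fun t => g t * ρ t) (Set.Icc a b)) :
    0 ≤ ∫ t in Set.Icc a b, g t * ρ t :=
  stmt_1_general a b p q ρ g hp hq hρint hρ1 hρ2 hρ3 hmass hmom hg hgint
end

section
/- Let 0 < b₂ ≤ b₁ and 0 ≤ c ≤ b₂. Then there exists a pair (δ₁, δ₂) with b₁/2 − b₂/6 ≤ δ₁ ≤ (2b₁ − c)/3 and b₂/3 ≤ δ₂ ≤ (2b₂ − c)/3 that simultaneously satisfies −3δ₁δ₂ − c(δ₁ + δ₂) + b₁b₂ = 0 and −(3/2)δ₂² + 2b₂δ₂ − b₂²/2 + (c − 2b₂ + 3δ₂)δ₁ = 0. -/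
set_option maxHeartbeats 1000000 in
theorem stmt_2 (b₁ b₂ c : ℝ) (hb₂ : 0 < b₂) (hb : b₂ ≤ b₁)
    (hc0 : 0 ≤ c) (hc : c ≤ b₂) :
    ∃ δ₁ δ₂ : ℝ,
      b₁ / 2 - b₂ / 6 ≤ δ₁ ∧ δ₁ ≤ (2 * b₁ - c) / 3 ∧
      b₂ / 3 ≤ δ₂ ∧ δ₂ ≤ (2 * b₂ - c) / 3 ∧
      -3 * δ₁ * δ₂ - c * (δ₁ + δ₂) + b₁ * b₂ = 0 ∧
      -(3 / 2) * δ₂ ^ 2 + 2 * b₂ * δ₂ - b₂ ^ 2 / 2 + (c - 2 * b₂ + 3 * δ₂) * δ₁ = 0 := by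
  have hb₁ : (0:ℝ) < b₁ := lt_of_lt_of_le hb₂ hb
  set G : ℝ → ℝ := fun x =>
    (-(3/2) * x ^ 2 + 2 * b₂ * x - b₂ ^ 2 / 2) * (3 * x + c)
      + (c - 2 * b₂ + 3 * x) * (b₁ * b₂ - c * x) with hG
  set a : ℝ := (3 * b₁ * b₂ - 2 * b₁ * c + c ^ 2) / (6 * b₁) with ha
  set lo : ℝ := max (b₂ / 3) a with hlo
  set hi : ℝ := (2 * b₂ - c) / 3 with hhi
  have hlohi : lo ≤ hi := by
    apply max_le
    · rw [hhi]; linarith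
    · rw [ha, hhi, div_le_div_iff₀ (by positivity) (by norm_num)]
      nlinarith [mul_le_mul hb hc hc0 (le_of_lt hb₁)]
  have hGlo : G lo ≤ 0 := by
    rcases max_cases (b₂ / 3) a with ⟨h1, h2⟩ | ⟨h1, h2⟩
    · have hval : G (b₂ / 3) = (c - b₂) * (b₁ * b₂ - c * b₂ / 3) := by
        simp only [hG]; ring
      rw [hlo, h1, hval]
      have h3 : c - b₂ ≤ 0 := by linarith
      have h4 : 0 ≤ b₁ * b₂ - c * b₂ / 3 := by nlinarith
      exact mul_nonpos_of_nonpos_of_nonneg h3 h4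
    · rw [hlo, h1]
      have key : G a = ((3 * b₁ * b₂ + c ^ 2) / (2 * b₁)) *
          ((-(3/2) * c ^ 4 + 3 * b₁ * b₂ * c ^ 2 + 6 * b₁ ^ 2 * c ^ 2
            + (9/2) * b₁ ^ 2 * b₂ ^ 2 - 12 * b₁ ^ 3 * b₂) / (36 * b₁ ^ 2)) := by
        simp only [hG, ha]; field_simp; ring
      rw [key]
      apply mul_nonpos_of_nonneg_of_nonpos
      · positivity
      · apply div_nonpos_of_nonpos_of_nonneg _ (by positivity)
        have hu : (0:ℝ) ≤ b₁ - b₂ := by linarith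
        have hv : (0:ℝ) ≤ b₂ - c := by linarith
        have hP : 12 * b₁ ^ 3 * b₂ + (3/2) * c ^ 4 - 3 * b₁ * b₂ * c ^ 2
            - 6 * b₁ ^ 2 * c ^ 2 - (9/2) * b₁ ^ 2 * b₂ ^ 2
            = 12 * ((b₂ - c) * c ^ 3) + 36 * ((b₂ - c) ^ 2 * c ^ 2)
              + 30 * ((b₂ - c) ^ 3 * c) + (15/2) * ((b₂ - c) ^ 4)
              + 12 * ((b₁ - b₂) * c ^ 3) + 66 * ((b₁ - b₂) * (b₂ - c) * c ^ 2)
              + 81 * ((b₁ - b₂) * (b₂ - c) ^ 2 * c) + 27 * ((b₁ - b₂) * (b₂ - c) ^ 3)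
              + (51/2) * ((b₁ - b₂) ^ 2 * c ^ 2) + 63 * ((b₁ - b₂) ^ 2 * (b₂ - c) * c)
              + (63/2) * ((b₁ - b₂) ^ 2 * (b₂ - c) ^ 2) + 12 * ((b₁ - b₂) ^ 3 * c)
              + 12 * ((b₁ - b₂) ^ 3 * (b₂ - c)) := by ring
        linarith [hP, mul_nonneg hv (pow_nonneg hc0 3),
          mul_nonneg (pow_nonneg hv 2) (pow_nonneg hc0 2),
          mul_nonneg (pow_nonneg hv 3) hc0, pow_nonneg hv 4,
          mul_nonneg hu (pow_nonneg hc0 3),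
          mul_nonneg (mul_nonneg hu hv) (pow_nonneg hc0 2),
          mul_nonneg (mul_nonneg hu (pow_nonneg hv 2)) hc0,
          mul_nonneg hu (pow_nonneg hv 3),
          mul_nonneg (pow_nonneg hu 2) (pow_nonneg hc0 2),
          mul_nonneg (mul_nonneg (pow_nonneg hu 2) hv) hc0,
          mul_nonneg (pow_nonneg hu 2) (pow_nonneg hv 2),
          mul_nonneg (pow_nonneg hu 3) hc0,
          mul_nonneg (pow_nonneg hu 3) hv]
  have hGhi : 0 ≤ G hi := by
    have hval : G ((2 * b₂ - c) / 3) = (2 * b₂) * ((1/6) * (b₂ + c) * (b₂ - c)) := by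
      simp only [hG]; ring
    rw [hhi, hval]
    have h5 : (0:ℝ) ≤ (1/6) * (b₂ + c) * (b₂ - c) := by
      apply mul_nonneg (by positivity); linarith
    positivity
  have hGcont : ContinuousOn G (Set.Icc lo hi) := by
    apply Continuous.continuousOn; rw [hG]; fun_prop
  have hmem : (0:ℝ) ∈ Set.Icc (G lo) (G hi) := ⟨hGlo, hGhi⟩
  obtain ⟨δ₂, hδ₂mem, hGδ₂⟩ := intermediate_value_Icc hlohi hGcont hmem
  obtain ⟨hδ₂lo, hδ₂hi⟩ := hδ₂mem
  have hδ₂b : b₂ / 3 ≤ δ₂ := le_trans (le_max_left _ _) hδ₂lo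
  have hδ₂a : a ≤ δ₂ := le_trans (le_max_right _ _) hδ₂lo
  have hden : (0:ℝ) < 3 * δ₂ + c := by linarith
  have hGz : (-(3/2) * δ₂ ^ 2 + 2 * b₂ * δ₂ - b₂ ^ 2 / 2) * (3 * δ₂ + c)
      + (c - 2 * b₂ + 3 * δ₂) * (b₁ * b₂ - c * δ₂) = 0 := hGδ₂
  refine ⟨(b₁ * b₂ - c * δ₂) / (3 * δ₂ + c), δ₂, ?_, ?_, hδ₂b, hδ₂hi, ?_, ?_⟩
  · rw [le_div_iff₀ hden]
    have h1 : δ₂ ≤ (2 * b₂ - c) / 3 := hδ₂hi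
    nlinarith [sq_nonneg (b₂ - c),
      mul_nonneg (sub_nonneg.2 h1) (by linarith : (0:ℝ) ≤ 9 * b₁ + 6 * c - 3 * b₂)]
  · rw [div_le_iff₀ hden]
    have h2 : 3 * b₁ * b₂ - 2 * b₁ * c + c ^ 2 ≤ 6 * b₁ * δ₂ := by
      rw [ha, div_le_iff₀ (by positivity)] at hδ₂a; linarith
    nlinarith
  · field_simp
    ring
  · field_simp
    linarith [hGz]
end

section
/- Let b₁ ≥ (3/2)b₂ with b₂ > 0, and suppose c ≥ b₂ satisfies the first equation of the pair below at (δ*, h) = ((c² + 6b₁b₂ − 7b₂²)/(12b₂), (2b₂ − c)/3). Then substituting this pair into 27(c + h + δ*)(b₂ + δ*)² − 4(4b₂ + 3δ*)(3(h + δ*)/2 + c)² yields −((c − b₂)(6b₁b₂² + b₂³ + 6b₁b₂c + 9b₂²c + b₂c² + c³))/(4b₂), which is ≤ 0 for all c ≥ b₂. -/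
theorem stmt_9 (b₁ b₂ c : ℝ) (hb₂ : 0 < b₂) (hb : (3/2) * b₂ ≤ b₁) (hc : b₂ ≤ c)
    (δs h : ℝ)
    (hδs : δs = (c ^ 2 + 6 * b₁ * b₂ - 7 * b₂ ^ 2) / (12 * b₂))
    (hh : h = (2 * b₂ - c) / 3)
    (heq : (3/2) * h ^ 2 + c * h + 2 * b₂ * δs - b₁ * b₂ + b₂ ^ 2 / 2 = 0) :
    27 * (c + h + δs) * (b₂ + δs) ^ 2
        - 4 * (4 * b₂ + 3 * δs) * (3 * (h + δs) / 2 + c) ^ 2 =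
      -((c - b₂) * (6 * b₁ * b₂ ^ 2 + b₂ ^ 3 + 6 * b₁ * b₂ * c + 9 * b₂ ^ 2 * c
          + b₂ * c ^ 2 + c ^ 3)) / (4 * b₂) ∧
    -((c - b₂) * (6 * b₁ * b₂ ^ 2 + b₂ ^ 3 + 6 * b₁ * b₂ * c + 9 * b₂ ^ 2 * c
        + b₂ * c ^ 2 + c ^ 3)) / (4 * b₂) ≤ 0 := by
  have hne : (12 : ℝ) * b₂ ≠ 0 := by positivity
  constructor
  · subst hδs hh
    field_simp
    ring
  · apply div_nonpos_of_nonpos_of_nonneg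
    · have h1 : 0 ≤ c - b₂ := by linarith
      have h2 : 0 ≤ 6 * b₁ * b₂ ^ 2 + b₂ ^ 3 + 6 * b₁ * b₂ * c + 9 * b₂ ^ 2 * c
          + b₂ * c ^ 2 + c ^ 3 := by
        have hc0 : 0 < c := lt_of_lt_of_le hb₂ hc
        have hb1 : 0 < b₁ := by linarith
        have := mul_pos (mul_pos hb1 hb₂) hb₂
        have := mul_pos (mul_pos hb1 hb₂) hc0
        have := mul_pos (mul_pos hb₂ hb₂) hc0
        have := mul_pos (mul_pos hb₂ hc0) hc0
        have := mul_pos (mul_pos hb₂ hb₂) hb₂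
        have := mul_pos (mul_pos hc0 hc0) hc0
        nlinarith
      nlinarith [mul_nonneg h1 h2]
    · positivity
end

section
/- Let b₁ ≥ (3/2)b₂ > 0 and suppose 108b₁² − 108b₁b₂ − 5b₂² > 0 and c ≥ 216b₁²b₂/(108b₁² − 108b₁b₂ − 5b₂²). Then (2/27)b₂³ + b₁²b₂²/(2c) − (1/16)b₂(2b₁ − b₂)² ≤ 0. -/
theorem stmt_16 (b₁ b₂ c : ℝ) (hb₂ : 0 < b₂) (hb : (3/2) * b₂ ≤ b₁)
    (hden : 0 < 108 * b₁ ^ 2 - 108 * b₁ * b₂ - 5 * b₂ ^ 2)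
    (hc : 216 * b₁ ^ 2 * b₂ / (108 * b₁ ^ 2 - 108 * b₁ * b₂ - 5 * b₂ ^ 2) ≤ c) :
    (2/27) * b₂ ^ 3 + b₁ ^ 2 * b₂ ^ 2 / (2 * c)
      - (1/16) * b₂ * (2 * b₁ - b₂) ^ 2 ≤ 0 := by
  have hb₁ : 0 < b₁ := lt_of_lt_of_le (by linarith) hb
  rw [div_le_iff₀ hden] at hc
  have hc0 : 0 < c := by nlinarith
  have key : b₁ ^ 2 * b₂ ^ 2 / (2 * c)
      ≤ b₂ * (108 * b₁ ^ 2 - 108 * b₁ * b₂ - 5 * b₂ ^ 2) / 432 := by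
    rw [div_le_div_iff₀ (by linarith) (by norm_num)]
    nlinarith [mul_le_mul_of_nonneg_left hc (le_of_lt hb₂)]
  nlinarith [key]
end
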